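/- An equivalence relation R is a governed stuttering bisimulation if and only if for all v R w: Ω(v) = Ω(w), and for all players i and sets of R-classes 𝒰, 𝒯 ⊆ V/R with [v]_R ∈ 𝒰 and [v]_R ∉ 𝒯: player i can force play from v via ⋃𝒰 to ⋃𝒯 iff player i can force play from w via ⋃𝒰 to ⋃𝒯. -/
import Mathlib


universe u

/-- A parity game: a directed graph with a total edge relation, a priority
function and an owner function (`true` = player even, `false` = player odd). -/
structure ParityGame (V : Type u) where
  edge : V → V → Prop
  total : ∀ v, ∃ w, edge v w
  prio : V → ℕ
  owner : V → Bool

namespace ParityGame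

variable {V : Type u}

/-- A (history-dependent) strategy: given the history of previously visited
vertices and the current vertex, choose a successor.  Only the values at
vertices owned by the given player matter. -/
abbrev Strategy (V : Type u) : Type u := List V → V → V

variable (G : ParityGame V)

/-- A strategy is valid for player `i` if it always proposes edges. -/
def ValidStrategy (i : Bool) (σ : Strategy V) : Prop :=
  ∀ h v, G.owner v = i → G.edge v (σ h v)

/-- A memoryless strategy only depends on the current vertex. -/
def Memoryless (σ : Strategy V) : Prop := ∀ h h' v, σ h v = σ h' v

/-- An (infinite) play is an infinite path in the game graph. -/
def IsPlay (p : ℕ → V) : Prop := ∀ n, G.edge (p n) (p (n + 1))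

/-- The history of a play before position `n`. -/
def hist (p : ℕ → V) (n : ℕ) : List V := List.ofFn (fun k : Fin n => p k)

/-- A play is consistent with a strategy `σ` of player `i` if at every vertex
owned by `i` the play follows `σ`. -/
def Consistent (i : Bool) (σ : Strategy V) (p : ℕ → V) : Prop :=
  ∀ n, G.owner (p n) = i → p (n + 1) = σ (hist p n) (p n)

/-- `G.ForcesVia i σ v U T`: every play from `v` consistent with `σ` reaches
`T`, all earlier vertices lying in `U`. -/
def ForcesVia (i : Bool) (σ : Strategy V) (v : V) (U T : Set V) : Prop :=
  ∀ p : ℕ → V, G.IsPlay p → G.Consistent i σ p → p 0 = v →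
    ∃ n, p n ∈ T ∧ ∀ j < n, p j ∈ U

/-- `v ⇒_{i,U} T`: player `i` has a memoryless strategy forcing every
consistent play from `v` to reach `T` while staying in `U` beforehand. -/
def Forces (i : Bool) (v : V) (U T : Set V) : Prop :=
  ∃ σ : Strategy V, G.ValidStrategy i σ ∧ Memoryless σ ∧ G.ForcesVia i σ v U T

/-- Every play from `v` consistent with `σ` stays in `U` forever. -/
def DivergesVia (i : Bool) (σ : Strategy V) (v : V) (U : Set V) : Prop :=
  ∀ p : ℕ → V, G.IsPlay p → G.Consistent i σ p → p 0 = v → ∀ n, p n ∈ U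

/-- `v ⇒^ω_{i,U}`: player `i` has a memoryless strategy keeping all
consistent plays from `v` forever inside `U`. -/
def Diverges (i : Bool) (v : V) (U : Set V) : Prop :=
  ∃ σ : Strategy V, G.ValidStrategy i σ ∧ Memoryless σ ∧ G.DivergesVia i σ v U

/-- Priority `k` occurs infinitely often on the play `p`. -/
def InfOften (p : ℕ → V) (k : ℕ) : Prop := ∀ N, ∃ n, N ≤ n ∧ G.prio (p n) = k

/-- Player even wins a play iff the least priority occurring infinitely often
is even. -/
def EvenWinsPlay (p : ℕ → V) : Prop := Even (sInf {k | G.InfOften p k})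

/-- Player `i` wins the play `p`. -/
def WinsPlay (i : Bool) (p : ℕ → V) : Prop := G.EvenWinsPlay p ↔ i = true

/-- `σ` is a winning strategy for player `i` from `v`. -/
def WinningFrom (i : Bool) (σ : Strategy V) (v : V) : Prop :=
  ∀ p : ℕ → V, G.IsPlay p → G.Consistent i σ p → p 0 = v → G.WinsPlay i p

end ParityGame

namespace ParityGame

/-- The `R`-class of `v`. -/
def cls {V : Type u} (R : V → V → Prop) (v : V) : Set V := {x | R v x}

variable {V : Type u} (G : ParityGame V)

/-- Governed stuttering bisimulations. -/
def IsGSB (R : V → V → Prop) : Prop :=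
  Equivalence R ∧ ∀ v w, R v w →
    G.prio v = G.prio w ∧
    (∀ u, ¬ R v u → (∃ v', G.edge v v' ∧ R u v') →
      G.Forces (G.owner v) w (cls R w) (cls R u)) ∧
    (∀ i : Bool, G.Diverges i v (cls R v) → G.Diverges i w (cls R w))

end ParityGame

namespace ParityGame

lemma bool_ne_iff {a b : Bool} : a ≠ b ↔ a = !b := by cases a <;> cases b <;> simp

lemma bool_self_ne_not (i : Bool) : i ≠ !i := by cases i <;> simp

variable {V : Type u} (G : ParityGame V)

/-! ### Plays generated by a step function -/

def iterPlay (s : V → V) (v : V) : ℕ → V := fun n => s^[n] v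

lemma iterPlay_zero (s : V → V) (v : V) : iterPlay s v 0 = v := rfl

lemma iterPlay_succ (s : V → V) (v : V) (n : ℕ) :
    iterPlay s v (n + 1) = s (iterPlay s v n) := Function.iterate_succ_apply' s n v

lemma isPlay_iterPlay (s : V → V) (hs : ∀ z, G.edge z (s z)) (v : V) :
    G.IsPlay (iterPlay s v) := fun n => by rw [iterPlay_succ]; exact hs _

lemma consistent_iterPlay (i : Bool) (σ : Strategy V) (hm : Memoryless σ)
    (s : V → V) (hstep : ∀ z, G.owner z = i → s z = σ [] z) (v : V) :
    G.Consistent i σ (iterPlay s v) := by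
  intro n hn
  rw [iterPlay_succ, hstep _ hn]
  exact hm [] (hist (iterPlay s v) n) _

/-! ### The attractor -/

def AttrN (i : Bool) (U T : Set V) : ℕ → Set V
  | 0 => T
  | n + 1 => AttrN i U T n ∪
      {x | x ∈ U ∧ ((G.owner x = i ∧ ∃ y, G.edge x y ∧ y ∈ AttrN i U T n) ∨
        (G.owner x ≠ i ∧ ∀ y, G.edge x y → y ∈ AttrN i U T n))}

lemma attrN_zero (i : Bool) (U T : Set V) : G.AttrN i U T 0 = T := rfl

lemma attrN_succ (i : Bool) (U T : Set V) (n : ℕ) :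
    G.AttrN i U T (n + 1) = G.AttrN i U T n ∪
      {x | x ∈ U ∧ ((G.owner x = i ∧ ∃ y, G.edge x y ∧ y ∈ G.AttrN i U T n) ∨
        (G.owner x ≠ i ∧ ∀ y, G.edge x y → y ∈ G.AttrN i U T n))} := rfl

lemma mem_attrN_succ {i : Bool} {U T : Set V} {n : ℕ} {x : V}
    (h : x ∈ G.AttrN i U T n ∨ (x ∈ U ∧ ((G.owner x = i ∧ ∃ y, G.edge x y ∧ y ∈ G.AttrN i U T n) ∨
        (G.owner x ≠ i ∧ ∀ y, G.edge x y → y ∈ G.AttrN i U T n)))) :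
    x ∈ G.AttrN i U T (n + 1) := by
  rw [attrN_succ]; exact h

lemma mem_attrN_succ_elim {i : Bool} {U T : Set V} {n : ℕ} {x : V}
    (h : x ∈ G.AttrN i U T (n + 1)) :
    x ∈ G.AttrN i U T n ∨ (x ∈ U ∧ ((G.owner x = i ∧ ∃ y, G.edge x y ∧ y ∈ G.AttrN i U T n) ∨
        (G.owner x ≠ i ∧ ∀ y, G.edge x y → y ∈ G.AttrN i U T n))) := by
  rwa [attrN_succ] at h

def Attr (i : Bool) (U T : Set V) : Set V := ⋃ n, G.AttrN i U T n

lemma attrN_mono (i : Bool) (U T : Set V) {n m : ℕ} (h : n ≤ m) :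
    G.AttrN i U T n ⊆ G.AttrN i U T m := by
  induction m, h using Nat.le_induction with
  | base => exact subset_rfl
  | succ m _ ih => rw [attrN_succ]; exact ih.trans Set.subset_union_left

lemma mem_attr_of_attrN {i : Bool} {U T : Set V} {n : ℕ} {x : V}
    (h : x ∈ G.AttrN i U T n) : x ∈ G.Attr i U T := Set.mem_iUnion.2 ⟨n, h⟩

lemma subset_attr (i : Bool) (U T : Set V) : T ⊆ G.Attr i U T :=
  fun _ hx => G.mem_attr_of_attrN (n := 0) (by rwa [attrN_zero])

lemma mem_attr_of_step [Fintype V] {i : Bool} {U T : Set V} {x : V} (hU : x ∈ U)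
    (h : (G.owner x = i ∧ ∃ y, G.edge x y ∧ y ∈ G.Attr i U T) ∨
         (G.owner x ≠ i ∧ ∀ y, G.edge x y → y ∈ G.Attr i U T)) :
    x ∈ G.Attr i U T := by
  classical
  rcases h with ⟨ho, y, he, hy⟩ | ⟨ho, hall⟩
  · obtain ⟨n, hn⟩ := Set.mem_iUnion.1 hy
    exact G.mem_attr_of_attrN (n := n + 1) (G.mem_attrN_succ (Or.inr ⟨hU, Or.inl ⟨ho, y, he, hn⟩⟩))
  · have hex : ∃ N, ∀ y, G.edge x y → y ∈ G.AttrN i U T N := by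
      have h1 : ∀ y : V, ∃ n, G.edge x y → y ∈ G.AttrN i U T n := by
        intro y
        by_cases he : G.edge x y
        · obtain ⟨n, hn⟩ := Set.mem_iUnion.1 (hall y he); exact ⟨n, fun _ => hn⟩
        · exact ⟨0, fun h => absurd h he⟩
      choose f hf using h1
      exact ⟨Finset.univ.sup f, fun y he =>
        G.attrN_mono i U T (Finset.le_sup (Finset.mem_univ y)) (hf y he)⟩
    obtain ⟨N, hN⟩ := hex
    exact G.mem_attr_of_attrN (n := N + 1) (G.mem_attrN_succ (Or.inr ⟨hU, Or.inr ⟨ho, hN⟩⟩))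

lemma attr_trans [Fintype V] {i : Bool} {U₁ T₁ U₂ T₂ : Set V} (hU : U₁ ⊆ U₂)
    (hT : T₁ ⊆ G.Attr i U₂ T₂) : G.Attr i U₁ T₁ ⊆ G.Attr i U₂ T₂ := by
  refine Set.iUnion_subset fun n => ?_
  induction n with
  | zero => rw [attrN_zero]; exact hT
  | succ n ih =>
    intro x hx
    rcases G.mem_attrN_succ_elim hx with hx | ⟨hxU, hbr⟩
    · exact ih hx
    · refine G.mem_attr_of_step (hU hxU) ?_
      rcases hbr with ⟨ho, y, he, hy⟩ | ⟨ho, hall⟩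
      · exact Or.inl ⟨ho, y, he, ih hy⟩
      · exact Or.inr ⟨ho, fun y he => ih (hall y he)⟩

end ParityGame

namespace ParityGame

variable {V : Type u} (G : ParityGame V)

/-! ### Canonical step functions -/

open Classical in
/-- A step function escaping a set `B` whenever possible. -/
noncomputable def safeStep (B : Set V) : V → V := fun z =>
  if h : ∃ y, G.edge z y ∧ y ∉ B then h.choose else (G.total z).choose

lemma safeStep_edge (B : Set V) (z : V) : G.edge z (G.safeStep B z) := by
  simp only [safeStep]
  split
  next h => exact h.choose_spec.1
  next => exact (G.total z).choose_spec

lemma safeStep_not_mem {B : Set V} {z : V} (h : ∃ y, G.edge z y ∧ y ∉ B) :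
    G.safeStep B z ∉ B := by
  simp only [safeStep, dif_pos h]
  exact h.choose_spec.2

/-- Follow strategy `σ` at `j`-owned vertices, move arbitrarily elsewhere. -/
noncomputable def folStep (j : Bool) (σ : Strategy V) : V → V := fun z =>
  if G.owner z = j then σ [] z else (G.total z).choose

lemma folStep_edge (j : Bool) (σ : Strategy V) (hσ : G.ValidStrategy j σ) (z : V) :
    G.edge z (G.folStep j σ z) := by
  simp only [folStep]
  split
  next h => exact hσ [] z h
  next => exact (G.total z).choose_spec

lemma folStep_consistent (j : Bool) (σ : Strategy V) (hm : Memoryless σ) (v : V) :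
    G.Consistent j σ (iterPlay (G.folStep j σ) v) :=
  G.consistent_iterPlay j σ hm _ (fun z hz => by simp only [folStep, if_pos hz]) v

/-- Follow `σ` at `i`-owned vertices, `τ` elsewhere. -/
def combStep (i : Bool) (σ τ : Strategy V) : V → V := fun z =>
  if G.owner z = i then σ [] z else τ [] z

lemma combStep_edge (i : Bool) (σ τ : Strategy V) (hσ : G.ValidStrategy i σ)
    (hτ : G.ValidStrategy (!i) τ) (z : V) : G.edge z (G.combStep i σ τ z) := by
  simp only [combStep]
  split
  next h => exact hσ [] z h
  next h => exact hτ [] z (bool_ne_iff.1 h)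

lemma combStep_consistent₁ (i : Bool) (σ τ : Strategy V) (hm : Memoryless σ) (v : V) :
    G.Consistent i σ (iterPlay (G.combStep i σ τ) v) :=
  G.consistent_iterPlay i σ hm _ (fun z hz => by simp only [combStep, if_pos hz]) v

lemma combStep_consistent₂ (i : Bool) (σ τ : Strategy V) (hm : Memoryless τ) (v : V) :
    G.Consistent (!i) τ (iterPlay (G.combStep i σ τ) v) :=
  G.consistent_iterPlay (!i) τ hm _ (fun z hz => by
    have h : ¬ G.owner z = i := by rw [hz]; exact fun hh => bool_self_ne_not i hh.symm
    simp only [combStep, if_neg h]) v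

/-! ### The attractor strategy -/

noncomputable def attrRank (i : Bool) (U T : Set V) (x : V) : ℕ :=
  sInf {m | ∃ y, G.edge x y ∧ y ∈ G.AttrN i U T m}

open Classical in
noncomputable def attrStep (i : Bool) (U T : Set V) : V → V := fun x =>
  if h : ∃ y, G.edge x y ∧ y ∈ G.AttrN i U T (G.attrRank i U T x) then h.choose
  else (G.total x).choose

lemma attrStep_edge (i : Bool) (U T : Set V) (x : V) : G.edge x (G.attrStep i U T x) := by
  simp only [attrStep]
  split
  next h => exact h.choose_spec.1
  next => exact (G.total x).choose_spec

lemma attrStep_mem {i : Bool} {U T : Set V} {n : ℕ} {x : V}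
    (h : ∃ y, G.edge x y ∧ y ∈ G.AttrN i U T n) :
    G.attrStep i U T x ∈ G.AttrN i U T n := by
  have hS : G.attrRank i U T x ∈ {m | ∃ y, G.edge x y ∧ y ∈ G.AttrN i U T m} :=
    Nat.sInf_mem ⟨n, h⟩
  have hle : G.attrRank i U T x ≤ n := Nat.sInf_le h
  have hS' : ∃ y, G.edge x y ∧ y ∈ G.AttrN i U T (G.attrRank i U T x) := hS
  simp only [attrStep, dif_pos hS']
  exact G.attrN_mono i U T hle hS'.choose_spec.2

lemma attrN_reach (i : Bool) (U T : Set V) :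
    ∀ n, ∀ p : ℕ → V, G.IsPlay p →
      G.Consistent i (fun _ z => G.attrStep i U T z) p → p 0 ∈ G.AttrN i U T n →
      ∃ m, p m ∈ T ∧ ∀ j < m, p j ∈ U := by
  intro n
  induction n using Nat.strong_induction_on with
  | _ n IH =>
  intro p hp hc h0
  by_cases hT : p 0 ∈ T
  · exact ⟨0, hT, fun j hj => absurd hj (Nat.not_lt_zero j)⟩
  match n with
  | 0 => rw [G.attrN_zero] at h0; exact absurd h0 hT
  | n + 1 =>
    rcases G.mem_attrN_succ_elim h0 with h0 | ⟨hU0, hbr⟩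
    · exact IH n (Nat.lt_succ_self n) p hp hc h0
    · have hq : G.IsPlay (fun k => p (k + 1)) := fun k => hp (k + 1)
      have hqc : G.Consistent i (fun _ z => G.attrStep i U T z) (fun k => p (k + 1)) :=
        fun k hk => hc (k + 1) hk
      have h1 : p 1 ∈ G.AttrN i U T n := by
        rcases hbr with ⟨ho, y, he, hy⟩ | ⟨ho, hall⟩
        · have hstep := hc 0 ho
          rw [hstep]
          exact G.attrStep_mem ⟨y, he, hy⟩
        · exact hall _ (hp 0)
      obtain ⟨m, hmT, hmU⟩ := IH n (Nat.lt_succ_self n) _ hq hqc h1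
      refine ⟨m + 1, hmT, ?_⟩
      intro j hj
      match j with
      | 0 => exact hU0
      | j + 1 => exact hmU j (by omega)

lemma forces_of_mem_attr {i : Bool} {U T : Set V} {v : V}
    (h : v ∈ G.Attr i U T) : G.Forces i v U T := by
  obtain ⟨n, hn⟩ := Set.mem_iUnion.1 h
  refine ⟨fun _ z => G.attrStep i U T z, fun _ z _ => G.attrStep_edge i U T z,
    fun _ _ _ => rfl, ?_⟩
  intro p hp hc h0
  exact G.attrN_reach i U T n p hp hc (by rw [h0]; exact hn)

lemma mem_attr_of_forces [Fintype V] {i : Bool} {U T : Set V} {v : V}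
    (h : G.Forces i v U T) : v ∈ G.Attr i U T := by
  classical
  by_contra hv
  obtain ⟨σ, hσv, hσm, hσf⟩ := h
  set s : V → V := fun z =>
    if G.owner z = i then σ [] z else G.safeStep (G.Attr i U T) z with hsdef
  have hsedge : ∀ z, G.edge z (s z) := by
    intro z
    rw [hsdef]
    dsimp only
    split
    next h => exact hσv [] z h
    next => exact G.safeStep_edge _ z
  have hp : G.IsPlay (iterPlay s v) := G.isPlay_iterPlay s hsedge v
  have hcons : G.Consistent i σ (iterPlay s v) :=
    G.consistent_iterPlay i σ hσm s (fun z hz => by rw [hsdef]; dsimp only; rw [if_pos hz]) v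
  have hinv : ∀ n, (∀ j < n, iterPlay s v j ∈ U) → iterPlay s v n ∉ G.Attr i U T := by
    intro n
    induction n with
    | zero => intro _; exact hv
    | succ n ih =>
      intro hU
      have hpn : iterPlay s v n ∉ G.Attr i U T := ih (fun j hj => hU j (by omega))
      have hpnU : iterPlay s v n ∈ U := hU n (Nat.lt_succ_self n)
      rw [iterPlay_succ]
      by_cases ho : G.owner (iterPlay s v n) = i
      · intro hmem
        refine hpn (G.mem_attr_of_step hpnU (Or.inl ⟨ho, s (iterPlay s v n), hsedge _, hmem⟩))
      · have hex : ∃ y, G.edge (iterPlay s v n) y ∧ y ∉ G.Attr i U T := by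
          by_contra hno
          push_neg at hno
          exact hpn (G.mem_attr_of_step hpnU (Or.inr ⟨ho, hno⟩))
        rw [hsdef]
        dsimp only
        rw [if_neg ho]
        exact G.safeStep_not_mem hex
  obtain ⟨m, hmT, hmU⟩ := hσf (iterPlay s v) hp hcons rfl
  exact hinv m hmU (G.subset_attr i U T hmT)

/-! ### Divergence and determinacy -/

lemma diverges_of_not_attr [Fintype V] (i : Bool) (U : Set V) (v : V)
    (hv : v ∉ G.Attr (!i) Set.univ Uᶜ) : G.Diverges i v U := by
  classical
  set B := G.Attr (!i) Set.univ Uᶜ with hB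
  have hUofB : ∀ z, z ∉ B → z ∈ U := by
    intro z hz
    by_contra hzU
    exact hz (G.subset_attr _ _ _ hzU)
  have hstep : ∀ z, z ∉ B → G.owner z = i → ∃ y, G.edge z y ∧ y ∉ B := by
    intro z hz ho
    by_contra hno
    push_neg at hno
    refine hz (G.mem_attr_of_step (Set.mem_univ z) (Or.inr ⟨?_, fun y he => hno y he⟩))
    rw [ho]; exact bool_self_ne_not i
  have hstep' : ∀ z, z ∉ B → G.owner z ≠ i → ∀ y, G.edge z y → y ∉ B := by
    intro z hz ho y he hy
    exact hz (G.mem_attr_of_step (Set.mem_univ z) (Or.inl ⟨bool_ne_iff.1 ho, y, he, hy⟩))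
  refine ⟨fun _ z => G.safeStep B z, fun _ z _ => G.safeStep_edge B z, fun _ _ _ => rfl, ?_⟩
  intro p hp hc h0 n
  have key : ∀ n, p n ∉ B := by
    intro n
    induction n with
    | zero => rw [h0]; exact hv
    | succ n ih =>
      by_cases ho : G.owner (p n) = i
      · have := hc n ho
        rw [this]
        exact G.safeStep_not_mem (hstep _ ih ho)
      · exact hstep' _ ih ho _ (hp n) 
  exact hUofB _ (key n)

lemma not_forces_of_diverges {i : Bool} {U : Set V} {v : V}
    (hd : G.Diverges i v U) : ¬ G.Forces (!i) v Set.univ Uᶜ := by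
  rintro ⟨τ, hτv, hτm, hτf⟩
  obtain ⟨σ, hσv, hσm, hσd⟩ := hd
  have hp : G.IsPlay (iterPlay (G.combStep i σ τ) v) :=
    G.isPlay_iterPlay _ (G.combStep_edge i σ τ hσv hτv) v
  obtain ⟨m, hm1, _⟩ := hτf _ hp (G.combStep_consistent₂ i σ τ hτm v) rfl
  exact hm1 (hσd _ hp (G.combStep_consistent₁ i σ τ hσm v) rfl m)

end ParityGame

namespace ParityGame

variable {V : Type u} (G : ParityGame V)

lemma cls_eq {R : V → V → Prop} (hE : Equivalence R) {v w : V} (h : R v w) :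
    cls R v = cls R w :=
  Set.ext fun x => ⟨fun hx => hE.trans (hE.symm h) hx, fun hx => hE.trans h hx⟩

lemma forces_exit {j : Bool} {C D : Set V} {z : V}
    (hf : G.Forces j z C D) (hzC : z ∈ C) (hdisj : ∀ c ∈ C, c ∉ D)
    (hnotC : ∀ s, G.edge z s → s ∉ C) :
    ∃ s, G.edge z s ∧ s ∈ D := by
  obtain ⟨σ, hσv, hσm, hσf⟩ := hf
  have hp : G.IsPlay (iterPlay (G.folStep j σ) z) :=
    G.isPlay_iterPlay _ (G.folStep_edge j σ hσv) z
  obtain ⟨k, hkD, hkU⟩ := hσf _ hp (G.folStep_consistent j σ hσm z) rfl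
  have hedge1 : G.edge z (iterPlay (G.folStep j σ) z 1) := hp 0
  match k, hkD, hkU with
  | 0, hkD, _ => exact absurd hkD (hdisj z hzC)
  | 1, hkD, _ => exact ⟨_, hedge1, hkD⟩
  | (k+2), _, hkU => exact absurd (hkU 1 (by omega)) (hnotC _ hedge1)

lemma saturation [Fintype V] {R : V → V → Prop} (hE : Equivalence R)
    (hR : ∀ v w, R v w →
      G.prio v = G.prio w ∧
      (∀ u, ¬ R v u → (∃ v', G.edge v v' ∧ R u v') →
        G.Forces (G.owner v) w (cls R w) (cls R u)) ∧
      (∀ i : Bool, G.Diverges i v (cls R v) → G.Diverges i w (cls R w)))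
    (i : Bool) (𝒰 𝒯 : Set (Set V))
    (h𝒰 : ∀ C ∈ 𝒰, ∃ u, C = cls R u) (h𝒯 : ∀ C ∈ 𝒯, ∃ u, C = cls R u) :
    ∀ n, ∀ x ∈ G.AttrN i (⋃₀ 𝒰) (⋃₀ 𝒯) n, ∀ y, R x y →
      y ∈ G.Attr i (⋃₀ 𝒰) (⋃₀ 𝒯) := by
  classical
  intro n
  induction n using Nat.strong_induction_on with
  | _ n IH =>
  intro x hx y hxy
  have hex : ∃ m, ∃ z, R x z ∧ z ∈ G.AttrN i (⋃₀ 𝒰) (⋃₀ 𝒯) m := ⟨n, x, hE.refl x, hx⟩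
  obtain ⟨z, hxz, hz⟩ := Nat.find_spec hex
  have hn0 : Nat.find hex ≤ n := Nat.find_le ⟨x, hE.refl x, hx⟩
  have hmin : ∀ m < Nat.find hex, ∀ z', R x z' → z' ∉ G.AttrN i (⋃₀ 𝒰) (⋃₀ 𝒯) m :=
    fun m hm z' h1 h2 => Nat.find_min hex hm ⟨z', h1, h2⟩
  have hzy : R z y := hE.trans (hE.symm hxz) hxy
  cases hcase : Nat.find hex with
  | zero =>
    rw [hcase, G.attrN_zero] at hz
    obtain ⟨D, hD, hzD⟩ := hz
    obtain ⟨u, rfl⟩ := h𝒯 D hD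
    exact G.mem_attr_of_attrN (n := 0)
      (by rw [G.attrN_zero]; exact ⟨cls R u, hD, hE.trans hzD hzy⟩)
  | succ m =>
    rw [hcase] at hz hn0 hmin
    have hminz : z ∉ G.AttrN i (⋃₀ 𝒰) (⋃₀ 𝒯) m := hmin m (Nat.lt_succ_self m) z hxz
    rcases G.mem_attrN_succ_elim hz with hz' | ⟨hzU, hbr⟩
    · exact absurd hz' hminz
    obtain ⟨C', hC'𝒰, hzC'⟩ := hzU
    obtain ⟨u₀, rfl⟩ := h𝒰 C' hC'𝒰
    have hC𝒰 : cls R z ∈ 𝒰 := by rwa [cls_eq hE (hzC' : R u₀ z)] at hC'𝒰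
    have hCU : cls R z ⊆ ⋃₀ 𝒰 := fun c hc => ⟨cls R z, hC𝒰, hc⟩
    have hIHm : ∀ s ∈ G.AttrN i (⋃₀ 𝒰) (⋃₀ 𝒯) m, ∀ c, R s c →
        c ∈ G.Attr i (⋃₀ 𝒰) (⋃₀ 𝒯) :=
      fun s hs c hc => IH m (by omega) s hs c hc
    rcases hbr with ⟨ho, y', he, hy'⟩ | ⟨ho, hall⟩
    · -- the minimal-rank vertex is owned by `i`
      by_cases hzy' : R z y'
      · exact absurd hy' (hmin m (Nat.lt_succ_self m) y' (hE.trans hxz hzy'))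
      · have hforce := (hR z y hzy).2.1 y' hzy' ⟨y', he, hE.refl y'⟩
        rw [ho, ← cls_eq hE hzy] at hforce
        have h1 : cls R y' ⊆ G.Attr i (⋃₀ 𝒰) (⋃₀ 𝒯) := fun c hc => hIHm y' hy' c hc
        exact G.attr_trans hCU h1 (G.mem_attr_of_forces hforce)
    · -- the minimal-rank vertex is owned by the opponent
      have hnotC : ∀ s, G.edge z s → s ∉ cls R z := fun s hs hsC =>
        hmin m (Nat.lt_succ_self m) s (hE.trans hxz hsC) (hall s hs)
      have hnodiv : ∀ y', R z y' → ¬ G.Diverges (!i) y' (cls R z) := by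
        intro y' hy' hdiv
        have hdiv' : G.Diverges (!i) y' (cls R y') := by rwa [← cls_eq hE hy']
        have hdz : G.Diverges (!i) z (cls R z) := (hR y' z (hE.symm hy')).2.2 (!i) hdiv'
        obtain ⟨τ, hτv, hτm, hτd⟩ := hdz
        have hp : G.IsPlay (iterPlay (G.folStep (!i) τ) z) :=
          G.isPlay_iterPlay _ (G.folStep_edge (!i) τ hτv) z
        have h1 := hτd _ hp (G.folStep_consistent (!i) τ hτm z) rfl 1
        exact hnotC _ (hp 0) h1
      have hB : ∀ y', R z y' → y' ∈ G.Attr i Set.univ (cls R z)ᶜ := by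
        intro y' hy'
        by_contra hc
        exact hnodiv y' hy'
          (G.diverges_of_not_attr (!i) (cls R z) y' (by rw [Bool.not_not]; exact hc))
      have hexitA : ∀ (j : Bool) (u : V), ¬ R z u → G.Forces j z (cls R z) (cls R u) →
          cls R u ⊆ G.Attr i (⋃₀ 𝒰) (⋃₀ 𝒯) := by
        intro j u hzu hf
        have hdisj : ∀ c ∈ cls R z, c ∉ cls R u := fun c hc hcu =>
          hzu (hE.trans hc (hE.symm hcu))
        obtain ⟨s, hes, hsD⟩ := G.forces_exit hf (hE.refl z) hdisj hnotC
        exact fun c hc => hIHm s (hall s hes) c (hE.trans (hE.symm hsD) hc)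
      have hinner : ∀ k, ∀ y', R z y' → y' ∈ G.AttrN i Set.univ (cls R z)ᶜ k →
          y' ∈ G.Attr i (⋃₀ 𝒰) (⋃₀ 𝒯) := by
        intro k
        induction k using Nat.strong_induction_on with
        | _ k IH2 =>
        intro y' hy' hyB
        match k, hyB with
        | 0, hyB =>
          rw [G.attrN_zero] at hyB
          exact absurd (show y' ∈ cls R z from hy') hyB
        | k + 1, hyB =>
          rcases G.mem_attrN_succ_elim hyB with hyB | ⟨_, hbr2⟩
          · exact IH2 k (Nat.lt_succ_self k) y' hy' hyB
          · have hyU : y' ∈ ⋃₀ 𝒰 := hCU hy'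
            rcases hbr2 with ⟨ho2, y'', he2, hy''⟩ | ⟨ho2, hall2⟩
            · by_cases hc : R z y''
              · exact G.mem_attr_of_step hyU
                  (Or.inl ⟨ho2, y'', he2, IH2 k (Nat.lt_succ_self k) y'' hc hy''⟩)
              · have hny : ¬ R y' y'' := fun h => hc (hE.trans hy' h)
                have hforce := (hR y' z (hE.symm hy')).2.1 y'' hny ⟨y'', he2, hE.refl y''⟩
                rw [ho2] at hforce
                exact G.mem_attr_of_step hyU
                  (Or.inl ⟨ho2, y'', he2, hexitA i y'' hc hforce (hE.refl y'')⟩)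
            · refine G.mem_attr_of_step hyU (Or.inr ⟨ho2, fun y'' he2 => ?_⟩)
              by_cases hc : R z y''
              · exact IH2 k (Nat.lt_succ_self k) y'' hc (hall2 y'' he2)
              · have hny : ¬ R y' y'' := fun h => hc (hE.trans hy' h)
                have hforce := (hR y' z (hE.symm hy')).2.1 y'' hny ⟨y'', he2, hE.refl y''⟩
                rw [bool_ne_iff.1 ho2] at hforce
                exact hexitA (!i) y'' hc hforce (hE.refl y'')
      obtain ⟨k, hk⟩ := Set.mem_iUnion.1 (hB y hzy)
      exact hinner k y hzy hk

end ParityGame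

/-- Characterisation of governed stuttering bisimulation in terms of forcing
via a set of classes containing `[v]_R` into a set of classes avoiding it. -/
theorem isGSB_iff_via_classSets_form {V : Type u} [Fintype V]
    (G : ParityGame V) (R : V → V → Prop) :
    G.IsGSB R ↔
      (Equivalence R ∧ ∀ v w, R v w →
        G.prio v = G.prio w ∧
        ∀ (i : Bool) (𝒰 𝒯 : Set (Set V)),
          (∀ C ∈ 𝒰, ∃ u, C = ParityGame.cls R u) →
          (∀ C ∈ 𝒯, ∃ u, C = ParityGame.cls R u) →
          ParityGame.cls R v ∈ 𝒰 → ParityGame.cls R v ∉ 𝒯 →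
          (G.Forces i v (⋃₀ 𝒰) (⋃₀ 𝒯) ↔ G.Forces i w (⋃₀ 𝒰) (⋃₀ 𝒯))) := by
  classical
  constructor
  · rintro ⟨hE, hR⟩
    refine ⟨hE, fun v w hvw => ⟨(hR v w hvw).1, ?_⟩⟩
    intro i 𝒰 𝒯 h𝒰 h𝒯 _ _
    constructor
    · intro hf
      obtain ⟨n, hn⟩ := Set.mem_iUnion.1 (G.mem_attr_of_forces hf)
      exact G.forces_of_mem_attr (G.saturation hE hR i 𝒰 𝒯 h𝒰 h𝒯 n v hn w hvw)
    · intro hf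
      obtain ⟨n, hn⟩ := Set.mem_iUnion.1 (G.mem_attr_of_forces hf)
      exact G.forces_of_mem_attr (G.saturation hE hR i 𝒰 𝒯 h𝒰 h𝒯 n w hn v (hE.symm hvw))
  · rintro ⟨hE, h⟩
    refine ⟨hE, fun v w hvw => ?_⟩
    obtain ⟨hp, hff⟩ := h v w hvw
    refine ⟨hp, ?_, ?_⟩
    · -- transfer of class-exiting moves
      rintro u hnRu ⟨v', hev, hRuv'⟩
      have hiff := hff (G.owner v) {ParityGame.cls R v} {ParityGame.cls R u}
        (fun C hC => ⟨v, Set.mem_singleton_iff.1 hC⟩)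
        (fun C hC => ⟨u, Set.mem_singleton_iff.1 hC⟩)
        rfl
        (by
          intro hC
          rw [Set.mem_singleton_iff] at hC
          have hu : u ∈ ParityGame.cls R u := hE.refl u
          rw [← hC] at hu
          exact hnRu hu)
      rw [Set.sUnion_singleton, Set.sUnion_singleton] at hiff
      have hfv : G.Forces (G.owner v) v (ParityGame.cls R v) (ParityGame.cls R u) := by
        refine ⟨fun _ z => if z = v then v' else (G.total z).choose, ?_, fun _ _ _ => rfl, ?_⟩
        · intro hh z _
          by_cases hz : z = v
          · subst hz; simp only [if_pos rfl]; exact hev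
          · simp only [if_neg hz]; exact (G.total z).choose_spec
        · intro p hp' hc h0
          refine ⟨1, ?_, ?_⟩
          · have hcons := hc 0 (by rw [h0])
            rw [hcons, h0]
            simp only [if_pos rfl]
            exact hRuv'
          · intro j hj
            have hj0 : j = 0 := by omega
            subst hj0
            rw [h0]
            exact hE.refl v
      have hres := hiff.1 hfv
      rwa [ParityGame.cls_eq hE hvw] at hres
    · -- transfer of divergence
      intro j hdiv
      have hnf : ¬ G.Forces (!j) v Set.univ (ParityGame.cls R v)ᶜ :=
        G.not_forces_of_diverges hdiv
      have hU : ⋃₀ {C : Set V | ∃ u, C = ParityGame.cls R u} = Set.univ := by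
        ext a
        simp only [Set.mem_sUnion, Set.mem_univ, iff_true]
        exact ⟨ParityGame.cls R a, ⟨a, rfl⟩, hE.refl a⟩
      have hT : ⋃₀ {C : Set V | (∃ u, C = ParityGame.cls R u) ∧ C ≠ ParityGame.cls R v}
          = (ParityGame.cls R v)ᶜ := by
        ext a
        constructor
        · rintro ⟨C, ⟨⟨u, rfl⟩, hne⟩, haC⟩
          intro hav
          refine hne ?_
          rw [ParityGame.cls_eq hE (haC : R u a), ← ParityGame.cls_eq hE (hav : R v a)]
        · intro ha
          exact ⟨ParityGame.cls R a, ⟨⟨a, rfl⟩, fun hcon => ha (by rw [← hcon]; exact hE.refl a)⟩,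
            hE.refl a⟩
      have hiff := hff (!j) {C : Set V | ∃ u, C = ParityGame.cls R u}
        {C : Set V | (∃ u, C = ParityGame.cls R u) ∧ C ≠ ParityGame.cls R v}
        (fun C hC => hC) (fun C hC => hC.1) ⟨v, rfl⟩ (fun hC => hC.2 rfl)
      rw [hU, hT] at hiff
      have hnfw : ¬ G.Forces (!j) w Set.univ (ParityGame.cls R v)ᶜ := fun hh => hnf (hiff.2 hh)
      rw [ParityGame.cls_eq hE hvw] at hnfw
      exact G.diverges_of_not_attr j (ParityGame.cls R w) w
        (fun hmem => hnfw (G.forces_of_mem_attr hmem))
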